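/- arXiv:0901.3641 — 3 statements merged into one kernel-verified Lean document; each statement's English description precedes it below -/
import Mathlib

section
/- Asymptotic optimality (limit computation): for fixed q >= 2, consider sequences of finite sets R of places with all data as in the genus and supersingular point formulas with o of degree 1. Let S(R) = (1/(q^2-1)) prod_{x in R}(q^{d_x}-1)(q-1) + (q/(q+1)) 2^{#R} wp(R union o) and g(R) = 1 + (1/(q^2-1))(prod_{x in R}(q^{d_x}-1) - q(q-1)2^{#R-1} wp(R)). Then as deg(r) = sum_{x in R} d_x tends to infinity, S(R)/g(R) tends to q - 1. -/
/-!
Up to the common factor `∏ (q ^ d_x - 1) / (q ^ 2 - 1)`, `S(R)` is `q - 1 + u` and `g(R)` is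
`1 + v`, where `u` and `v` are bounded by a multiple of `2 ^ #R / ∏ (q ^ d_x - 1)`. Since
`2 ^ d ≤ 2 (q ^ d - 1)`, this ratio is at most `4 ^ #R / 2 ^ deg 𝔯`, and since there are at most
`q` places of degree 1 and `q ^ 2` of degree 2, `3 #R ≤ deg 𝔯 + 2 q + q ^ 2`; so the ratio
tends to `0` as `deg 𝔯 → ∞`.
-/

open Filter Topology

theorem tendsto_div_of_eq_mul {α K : Type*} [Field K] [TopologicalSpace K]
    [IsTopologicalDivisionRing K] {l : Filter α}
    {f g A u v : α → K} {a : K} (hf : ∀ n, f n = A n * (a + u n))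
    (hg : ∀ n, g n = A n * (1 + v n)) (hA : ∀ n, A n ≠ 0)
    (hu : Tendsto u l (𝓝 0)) (hv : Tendsto v l (𝓝 0)) :
    Tendsto (fun n => f n / g n) l (𝓝 a) := by
  have hv' : Tendsto (fun n => 1 + v n) l (𝓝 1) := by
    simpa using tendsto_const_nhds.add hv
  have hlim : Tendsto (fun n => (a + u n) / (1 + v n)) l (𝓝 a) := by
    simpa [Pi.div_def] using (tendsto_const_nhds.add hu).div hv' one_ne_zero
  refine hlim.congr fun n => ?_
  rw [hf, hg, mul_div_mul_left _ _ (hA n)]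

theorem tendsto_four_pow_div_two_pow {α : Type*} {l : Filter α} {a b : α → ℕ} (c : ℕ)
    (hab : ∀ n, 3 * a n ≤ b n + c) (hb : Tendsto b l atTop) :
    Tendsto (fun n => (4 : ℚ) ^ a n / 2 ^ b n) l (𝓝 0) := by
  have hb3 : Tendsto (fun n => (2 : ℚ) ^ (b n / 3)) l atTop :=
    (tendsto_pow_atTop_atTop_of_one_lt one_lt_two).comp
      ((Nat.tendsto_div_const_atTop three_ne_zero).comp hb)
  refine tendsto_of_tendsto_of_tendsto_of_le_of_le tendsto_const_nhds
    (tendsto_const_nhds (x := (2 : ℚ) ^ c).div_atTop hb3) (fun n => by positivity) (fun n => ?_)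
  have hexp : 2 * a n + b n / 3 ≤ b n + c := by have := hab n; omega
  rw [div_le_div_iff₀ (by positivity) (by positivity), show (4 : ℚ) = 2 ^ 2 by norm_num,
    ← pow_mul, ← pow_add, ← pow_add]
  exact pow_le_pow_right₀ one_le_two (by omega)

section Places

variable {P : Type*} {q : ℕ}

theorem two_pow_le_two_mul_pow_sub_one (hq : 2 ≤ q) {d : ℕ} (hd : 1 ≤ d) :
    (2 : ℚ) ^ d ≤ 2 * ((q : ℚ) ^ d - 1) := by
  have h2q : (2 : ℚ) ^ d ≤ (q : ℚ) ^ d := pow_le_pow_left₀ zero_le_two (by exact_mod_cast hq) d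
  have h2 : (2 : ℚ) ≤ 2 ^ d := le_self_pow₀ one_le_two (by omega)
  linarith

theorem one_le_prod_pow_sub_one (hq : 2 ≤ q) (deg : P → ℕ) (hdeg : ∀ x, 1 ≤ deg x)
    (T : Finset P) : 1 ≤ ∏ x ∈ T, ((q : ℚ) ^ deg x - 1) :=
  Finset.one_le_prod fun x _ => by
    have h2 : (2 : ℚ) ≤ 2 ^ deg x := le_self_pow₀ one_le_two (by have := hdeg x; omega)
    linarith [two_pow_le_two_mul_pow_sub_one hq (hdeg x)]

theorem two_pow_card_div_prod_le (hq : 2 ≤ q) (deg : P → ℕ) (hdeg : ∀ x, 1 ≤ deg x)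
    (T : Finset P) :
    (2 : ℚ) ^ T.card / ∏ x ∈ T, ((q : ℚ) ^ deg x - 1) ≤ 4 ^ T.card / 2 ^ ∑ x ∈ T, deg x := by
  have hprod : (2 : ℚ) ^ ∑ x ∈ T, deg x ≤ 2 ^ T.card * ∏ x ∈ T, ((q : ℚ) ^ deg x - 1) := by
    rw [← Finset.prod_pow_eq_pow_sum, ← Finset.prod_const, ← Finset.prod_mul_distrib]
    exact Finset.prod_le_prod (fun _ _ => by positivity)
      fun x _ => two_pow_le_two_mul_pow_sub_one hq (hdeg x)
  rw [div_le_div_iff₀ (by linarith [one_le_prod_pow_sub_one hq deg hdeg T]) (by positivity),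
    show (4 : ℚ) = 2 * 2 by norm_num, mul_pow, mul_assoc]
  gcongr

-- A place of degree `d ≥ 3` pays for its own weight `3`; only the at most `q + q ^ 2` places
-- of degree `1` and `2` fall short, by `2` and `1` respectively.
theorem three_mul_card_le (deg : P → ℕ) (hdeg : ∀ x, 1 ≤ deg x) (T : Finset P)
    (hcount : ∀ k, (T.filter (fun x => deg x = k)).card ≤ q ^ k) :
    3 * T.card ≤ ∑ x ∈ T, deg x + (2 * q + q ^ 2) := by
  have hsum : 3 * T.card ≤ ∑ x ∈ T, deg x + 2 * (T.filter (fun x => deg x = 1)).card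
      + (T.filter (fun x => deg x = 2)).card := by
    rw [Finset.card_filter, Finset.card_filter, Finset.card_eq_sum_ones, Finset.mul_sum,
      Finset.mul_sum, ← Finset.sum_add_distrib, ← Finset.sum_add_distrib]
    refine Finset.sum_le_sum fun x _ => ?_
    have := hdeg x
    split_ifs <;> omega
  have h1 := hcount 1
  have h2 := hcount 2
  rw [pow_one] at h1
  omega

theorem tendsto_two_pow_card_div_prod (hq : 2 ≤ q) (deg : P → ℕ) (hdeg : ∀ x, 1 ≤ deg x)
    (R : ℕ → Finset P) (hcount : ∀ n k, ((R n).filter (fun x => deg x = k)).card ≤ q ^ k)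
    (htend : Tendsto (fun n => ∑ x ∈ R n, deg x) atTop atTop) :
    Tendsto (fun n => (2 : ℚ) ^ (R n).card / ∏ x ∈ R n, ((q : ℚ) ^ deg x - 1))
      atTop (𝓝 0) :=
  tendsto_of_tendsto_of_tendsto_of_le_of_le tendsto_const_nhds
    (tendsto_four_pow_div_two_pow _
      (fun n => three_mul_card_le deg hdeg (R n) (hcount n)) htend)
    (fun n => div_nonneg (by positivity)
      (zero_le_one.trans (one_le_prod_pow_sub_one hq deg hdeg (R n))))
    (fun n => two_pow_card_div_prod_le hq deg hdeg (R n))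

end Places

theorem tendsto_mul_two_pow_div_of_le {α : Type*} {l : Filter α} {c m : α → ℕ} {y N : α → ℚ}
    (hN : ∀ n, 0 < N n) (hm : ∀ n, m n ≤ c n) (hy : ∀ n, |y n| ≤ 1)
    (hc : Tendsto (fun n => (2 : ℚ) ^ c n / N n) l (𝓝 0)) :
    Tendsto (fun n => y n * 2 ^ m n / N n) l (𝓝 0) := by
  have hle : ∀ n, |y n * 2 ^ m n / N n| ≤ 2 ^ c n / N n := fun n => by
    rw [abs_div, abs_mul, abs_pow, abs_two, abs_of_pos (hN n)]
    refine div_le_div_of_nonneg_right ?_ (hN n).le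
    calc |y n| * 2 ^ m n ≤ 1 * 2 ^ c n := by
          gcongr
          exacts [hy n, one_le_two, hm n]
      _ = 2 ^ c n := one_mul _
  exact tendsto_of_tendsto_of_tendsto_of_le_of_le (by simpa using hc.neg) hc
    (fun n => (abs_le.1 (hle n)).1) (fun n => (abs_le.1 (hle n)).2)

theorem supersingular_over_genus_tendsto_general
    (q : ℕ) (hq : 2 ≤ q) (P : Type*)
    (deg : P → ℕ) (hdeg : ∀ x, 1 ≤ deg x)
    (R : ℕ → Finset P)
    (hcount : ∀ n k, ((R n).filter (fun x => deg x = k)).card ≤ q ^ k)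
    (htend : Filter.Tendsto (fun n => ∑ x ∈ R n, deg x) Filter.atTop Filter.atTop)
    (e : ℕ → ℚ)
    (he1 : ∀ n, (∀ x ∈ R n, Odd (deg x)) → e n = 1)
    (he0 : ∀ n, (¬ ∀ x ∈ R n, Odd (deg x)) → e n = 0)
    (S g : ℕ → ℚ)
    (hS : ∀ n, S n = ((q : ℚ) - 1) * (∏ x ∈ R n, ((q : ℚ) ^ (deg x) - 1))
            / ((q : ℚ) ^ 2 - 1)
          + ((q : ℚ) / ((q : ℚ) + 1)) * 2 ^ (R n).card * e n)
    (hg : ∀ n, g n = 1 + ((∏ x ∈ R n, ((q : ℚ) ^ (deg x) - 1))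
            - (q : ℚ) * ((q : ℚ) - 1) * 2 ^ ((R n).card - 1) * e n)
            / ((q : ℚ) ^ 2 - 1)) :
    Filter.Tendsto (fun n => S n / g n) Filter.atTop (nhds ((q : ℚ) - 1)) := by
  set N := fun n => ∏ x ∈ R n, ((q : ℚ) ^ deg x - 1)
  have hN : ∀ n, 0 < N n := fun n =>
    one_pos.trans_le (one_le_prod_pow_sub_one hq deg hdeg (R n))
  have he : ∀ n, |e n| ≤ 1 := fun n => by
    rcases em (∀ x ∈ R n, Odd (deg x)) with h | h
    · rw [he1 n h, abs_one]
    · rw [he0 n h, abs_zero]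
      exact zero_le_one
  have ht := tendsto_two_pow_card_div_prod hq deg hdeg R hcount htend
  have hu := tendsto_mul_two_pow_div_of_le hN (fun n => le_rfl) he ht
  have hv₁ : Tendsto (fun n => 1 / N n) atTop (𝓝 0) := by
    simpa using tendsto_mul_two_pow_div_of_le (y := 1) (m := 0) hN (fun n => Nat.zero_le _)
      (fun n => abs_one.le) ht
  have hv₂ := tendsto_mul_two_pow_div_of_le (m := fun n => (R n).card - 1) hN
    (fun n => Nat.sub_le _ _) he ht
  have hq2 : (q : ℚ) ^ 2 - 1 ≠ 0 := by
    have : (2 : ℚ) ≤ q := by exact_mod_cast hq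
    nlinarith
  refine tendsto_div_of_eq_mul (A := fun n => N n / ((q : ℚ) ^ 2 - 1))
    (u := fun n => q * (q - 1) * (e n * 2 ^ (R n).card / N n))
    (v := fun n => ((q : ℚ) ^ 2 - 1) * (1 / N n)
      - q * (q - 1) * (e n * 2 ^ ((R n).card - 1) / N n))
    (fun n => ?_) (fun n => ?_) (fun n => div_ne_zero (hN n).ne' hq2)
    (by simpa using hu.const_mul _) (by simpa using (hv₁.const_mul _).sub (hv₂.const_mul _))
  all_goals
    have hNn : ∏ x ∈ R n, ((q : ℚ) ^ deg x - 1) ≠ 0 := (hN n).ne'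
    simp only [hS, hg, N]
    field_simp
    ring

/-- Asymptotic optimality (Theorem 5.1): with `o` of degree 1, letting
`S(R)` be the number of supersingular points and `g(R)` the genus, for any
sequence of even-cardinality sets `R_n` of places (at most `q^k` places of each
degree `k`) with `deg 𝔯 = ∑_{x∈R_n} deg x → ∞`, we have `S(R_n)/g(R_n) → q - 1`. -/
theorem supersingular_over_genus_tendsto
    (q : ℕ) (hq : 2 ≤ q) (P : Type*) [DecidableEq P]
    (deg : P → ℕ) (hdeg : ∀ x, 1 ≤ deg x)
    (R : ℕ → Finset P)
    (hcount : ∀ n k, ((R n).filter (fun x => deg x = k)).card ≤ q ^ k)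
    (heven : ∀ n, Even (R n).card) (hne : ∀ n, (R n).Nonempty)
    (htend : Filter.Tendsto (fun n => ∑ x ∈ R n, deg x) Filter.atTop Filter.atTop)
    (e : ℕ → ℚ)
    (he1 : ∀ n, (∀ x ∈ R n, Odd (deg x)) → e n = 1)
    (he0 : ∀ n, (¬ ∀ x ∈ R n, Odd (deg x)) → e n = 0)
    (S g : ℕ → ℚ)
    (hS : ∀ n, S n = ((q : ℚ) - 1) * (∏ x ∈ R n, ((q : ℚ) ^ (deg x) - 1))
            / ((q : ℚ) ^ 2 - 1)
          + ((q : ℚ) / ((q : ℚ) + 1)) * 2 ^ (R n).card * e n)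
    (hg : ∀ n, g n = 1 + ((∏ x ∈ R n, ((q : ℚ) ^ (deg x) - 1))
            - (q : ℚ) * ((q : ℚ) - 1) * 2 ^ ((R n).card - 1) * e n)
            / ((q : ℚ) ^ 2 - 1)) :
    Filter.Tendsto (fun n => S n / g n) Filter.atTop (nhds ((q : ℚ) - 1)) :=
  supersingular_over_genus_tendsto_general q hq P deg hdeg R hcount htend e he1 he0 S g hS hg
end

section
/- The Drinfeld–Vladut-type lower bound from supersingular points: with notation as above (o of degree 1), for every even-cardinality set R, S(R) >= (q-1)(g(R) - 1). Equivalently, prod_{x in R}(q^{d_x}-1)(q-1)/(q^2-1) + (q/(q+1))2^{#R} wp(R union o) >= (q-1)/(q^2-1) * (prod_{x in R}(q^{d_x}-1) - q(q-1)2^{#R-1} wp(R)). -/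
/-! Since `(q-1)∏(q_x-1)/(q²-1) = ((q-1)/(q²-1))·∏(q_x-1)`, the products cancel and the two sides
differ by `wp·(q/(q+1)·2^{#R} + q(q-1)²/(q²-1)·2^{#R-1})`, which is nonnegative because the
indicator `wp` is `0` or `1`. -/

theorem supersingular_bound_of_nonneg {K : Type*} [Field K] [LinearOrder K] [IsStrictOrderedRing K]
    {x e : K} (hx : 1 ≤ x) (he : 0 ≤ e) (P : K) (m n : ℕ) :
    (x - 1) / (x ^ 2 - 1) * (P - x * (x - 1) * 2 ^ m * e)
      ≤ (x - 1) * P / (x ^ 2 - 1) + x / (x + 1) * 2 ^ n * e := by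
  have hx1 : 0 ≤ x - 1 := sub_nonneg.mpr hx
  have hx2 : 0 ≤ x ^ 2 - 1 := sub_nonneg.mpr (one_le_pow₀ hx)
  have hx0 : 0 ≤ x := zero_le_one.trans hx
  have hcorr : 0 ≤ (x - 1) / (x ^ 2 - 1) * (x * (x - 1) * 2 ^ m * e) := by positivity
  have hwp : 0 ≤ x / (x + 1) * 2 ^ n * e := by positivity
  rw [mul_sub, mul_div_right_comm]
  linarith

theorem supersingular_lower_bound_general
    (q : ℕ) (hq : 2 ≤ q) (L : List ℕ)
    (e : ℚ) (he1 : (∀ d ∈ L, Odd d) → e = 1) (he0 : (¬ ∀ d ∈ L, Odd d) → e = 0) :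
    ((q : ℚ) - 1) * (L.map fun d => (q : ℚ) ^ d - 1).prod / ((q : ℚ) ^ 2 - 1)
        + ((q : ℚ) / ((q : ℚ) + 1)) * 2 ^ L.length * e
      ≥ (((q : ℚ) - 1) / ((q : ℚ) ^ 2 - 1))
          * ((L.map fun d => (q : ℚ) ^ d - 1).prod
              - (q : ℚ) * ((q : ℚ) - 1) * 2 ^ (L.length - 1) * e) := by
  have he : 0 ≤ e := by
    by_cases h : ∀ d ∈ L, Odd d
    · rw [he1 h]; exact zero_le_one
    · rw [he0 h]
  have hq1 : (1 : ℚ) ≤ q := by exact_mod_cast (by omega : 1 ≤ q)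
  exact supersingular_bound_of_nonneg hq1 he _ _ _

/-- Lower bound from supersingular points: with `deg o = 1` (so `wp(R∪o) = wp(R)`),
`S(R) ≥ (q-1)(g(R)-1)`, i.e.
`(q-1)∏(q^{d_x}-1)/(q^2-1) + (q/(q+1))2^{#R} wp ≥ (q-1)/(q^2-1)·(∏(q^{d_x}-1) - q(q-1)2^{#R-1} wp)`. -/
theorem supersingular_lower_bound
    (q : ℕ) (hq : 2 ≤ q) (L : List ℕ) (hL : ∀ d ∈ L, 1 ≤ d)
    (hlen : Even L.length) (hne : L ≠ [])
    (e : ℚ) (he1 : (∀ d ∈ L, Odd d) → e = 1) (he0 : (¬ ∀ d ∈ L, Odd d) → e = 0) :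
    ((q : ℚ) - 1) * (L.map fun d => (q : ℚ) ^ d - 1).prod / ((q : ℚ) ^ 2 - 1)
        + ((q : ℚ) / ((q : ℚ) + 1)) * 2 ^ L.length * e
      ≥ (((q : ℚ) - 1) / ((q : ℚ) ^ 2 - 1))
          * ((L.map fun d => (q : ℚ) ^ d - 1).prod
              - (q : ℚ) * ((q : ℚ) - 1) * 2 ^ (L.length - 1) * e) :=
  supersingular_lower_bound_general q hq L e he1 he0
end

section
/- Divisibility by q of the genus: with #R even, q divides 1 + (prod_{x in R}(q^{d_x}-1) - q(q-1)2^{#R-1}wp(R))/(q^2-1). Equivalently, prod_{x in R}(q^{d_x} - 1) ≡ q(q-1)2^{#R-1} wp(R) - (q^2 - 1) (mod q(q^2-1)). -/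
/-!
Modulo `q` every factor `q ^ d - 1` is `-1`, so for `#R` even the product is `1`, which is also the
value of `q (q - 1) 2 ^ (#R - 1) wp(R) - (q ^ 2 - 1)`. Modulo `q ^ 2 - 1` the difference
`∏ (q ^ d - 1) - q (q - 1) 2 ^ (#R - 1) wp(R)` vanishes: if some `d` is even, `q ^ 2 - 1` divides the
factor `q ^ d - 1`; if all are odd, every factor is `q - 1`, and `(q - 1) ^ (m + 1)` with `m` odd
is `q (q - 1) 2 ^ m` because `q - 1 ≡ -2` modulo `q + 1`. As `q` and `q ^ 2 - 1` are coprime, both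
congruences combine modulo `q (q ^ 2 - 1)`, and dividing by `q ^ 2 - 1` leaves the genus divisible
by `q`.
-/

theorem isCoprime_self_sq_sub_one {R : Type*} [CommRing R] (q : R) : IsCoprime q (q ^ 2 - 1) :=
  ⟨q, -1, by ring⟩

theorem sq_sub_one_dvd_pow_sub_one_of_even {R : Type*} [CommRing R] (q : R) {d : ℕ}
    (hd : Even d) : q ^ 2 - 1 ∣ q ^ d - 1 := by
  obtain ⟨k, rfl⟩ := hd
  rw [← two_mul, pow_mul]
  simpa using sub_dvd_pow_sub_pow (q ^ 2) 1 k

namespace Int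

theorem pow_sub_one_modEq_neg_one (q : ℤ) {d : ℕ} (hd : d ≠ 0) : q ^ d - 1 ≡ -1 [ZMOD q] := by
  obtain ⟨k, rfl⟩ := Nat.exists_eq_add_one_of_ne_zero hd
  exact Int.modEq_iff_dvd.mpr ⟨-q ^ k, by ring⟩

theorem pow_sub_one_modEq_sub_one_of_odd (q : ℤ) {d : ℕ} (hd : Odd d) :
    q ^ d - 1 ≡ q - 1 [ZMOD q ^ 2 - 1] := by
  obtain ⟨k, rfl⟩ := hd
  have hq2 : q ^ 2 ≡ 1 [ZMOD q ^ 2 - 1] := Int.modEq_sub _ _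
  calc q ^ (2 * k + 1) - 1 = (q ^ 2) ^ k * q - 1 := by ring
    _ ≡ 1 ^ k * q - 1 [ZMOD q ^ 2 - 1] := ((hq2.pow k).mul_right q).sub_right 1
    _ = q - 1 := by ring

theorem sub_one_pow_succ_modEq_of_odd (q : ℤ) {m : ℕ} (hm : Odd m) :
    (q - 1) ^ (m + 1) ≡ q * (q - 1) * 2 ^ m [ZMOD q ^ 2 - 1] := by
  obtain ⟨c, hc⟩ : q + 1 ∣ (q - 1) ^ m - (-2) ^ m := by
    simpa [sub_add] using sub_dvd_pow_sub_pow (q - 1) (-2) m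
  rw [hm.neg_pow] at hc
  exact Int.modEq_iff_dvd.mpr ⟨2 ^ m - c, by linear_combination (-(q - 1)) * hc⟩

theorem prod_map_pow_sub_one_modEq (q : ℤ) {L : List ℕ} (hL : ∀ d ∈ L, 1 ≤ d) :
    (L.map fun d => q ^ d - 1).prod ≡ (-1) ^ L.length [ZMOD q] := by
  simpa [List.map_const', List.prod_replicate] using
    ModEq.listProd_map fun d hd => pow_sub_one_modEq_neg_one q (Nat.one_le_iff_ne_zero.mp (hL d hd))

theorem prod_map_pow_sub_one_modEq_of_odd (q : ℤ) {L : List ℕ} (hL : ∀ d ∈ L, Odd d) :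
    (L.map fun d => q ^ d - 1).prod ≡ (q - 1) ^ L.length [ZMOD q ^ 2 - 1] := by
  simpa [List.map_const', List.prod_replicate] using
    ModEq.listProd_map fun d hd => pow_sub_one_modEq_sub_one_of_odd q (hL d hd)

end Int

theorem dvd_prod_map_pow_sub_one_sub (q : ℤ) {L : List ℕ} (hL : ∀ d ∈ L, 1 ≤ d)
    (hlen : Even L.length) (e : ℤ) :
    q ∣ (L.map fun d => q ^ d - 1).prod - (q * (q - 1) * 2 ^ (L.length - 1) * e - (q ^ 2 - 1)) := by
  have hprod := Int.prod_map_pow_sub_one_modEq q hL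
  rw [hlen.neg_one_pow] at hprod
  have hcorr : q * (q - 1) * 2 ^ (L.length - 1) * e - (q ^ 2 - 1) ≡ 1 [ZMOD q] :=
    Int.modEq_iff_dvd.mpr ⟨q - (q - 1) * 2 ^ (L.length - 1) * e, by ring⟩
  exact (hprod.trans hcorr.symm).symm.dvd

theorem sq_sub_one_dvd_prod_map_pow_sub_one_sub (q : ℤ) {L : List ℕ} (hlen : Even L.length)
    (hne : L ≠ []) {e : ℤ} (he1 : (∀ d ∈ L, Odd d) → e = 1) (he0 : (¬ ∀ d ∈ L, Odd d) → e = 0) :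
    q ^ 2 - 1 ∣ (L.map fun d => q ^ d - 1).prod - q * (q - 1) * 2 ^ (L.length - 1) * e := by
  by_cases hodd : ∀ d ∈ L, Odd d
  · obtain ⟨m, hm⟩ := Nat.exists_eq_add_one_of_ne_zero (List.length_pos_iff.mpr hne).ne'
    have hm_odd : Odd m := by
      rw [hm, Nat.even_add_one, Nat.not_even_iff_odd] at hlen
      exact hlen
    rw [he1 hodd, mul_one, hm, Nat.add_sub_cancel]
    have hprod := Int.prod_map_pow_sub_one_modEq_of_odd q hodd
    rw [hm] at hprod
    exact (hprod.trans (Int.sub_one_pow_succ_modEq_of_odd q hm_odd)).symm.dvd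
  · rw [he0 hodd, mul_zero, sub_zero]
    push Not at hodd
    obtain ⟨d, hd, hd_even⟩ := hodd
    exact (sq_sub_one_dvd_pow_sub_one_of_even q (Nat.not_odd_iff_even.mp hd_even)).trans
      (List.dvd_prod (List.mem_map_of_mem hd))

theorem genus_divisible_by_q_general
    (q : ℕ) (L : List ℕ) (hL : ∀ d ∈ L, 1 ≤ d)
    (hlen : Even L.length) (hne : L ≠ [])
    (e : ℤ) (he1 : (∀ d ∈ L, Odd d) → e = 1) (he0 : (¬ ∀ d ∈ L, Odd d) → e = 0) :
    (∀ g : ℤ, ((q : ℤ) ^ 2 - 1) * (g - 1)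
        = (L.map fun d => (q : ℤ) ^ d - 1).prod
            - (q : ℤ) * ((q : ℤ) - 1) * 2 ^ (L.length - 1) * e
      → (q : ℤ) ∣ g) ∧
    ((q : ℤ) * ((q : ℤ) ^ 2 - 1)) ∣
      ((L.map fun d => (q : ℤ) ^ d - 1).prod
        - ((q : ℤ) * ((q : ℤ) - 1) * 2 ^ (L.length - 1) * e - ((q : ℤ) ^ 2 - 1))) := by
  have hcop := isCoprime_self_sq_sub_one (q : ℤ)
  have hdvd := hcop.mul_dvd (dvd_prod_map_pow_sub_one_sub (q : ℤ) hL hlen e) (by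
    rw [sub_sub_eq_add_sub, add_sub_right_comm]
    exact (sq_sub_one_dvd_prod_map_pow_sub_one_sub (q : ℤ) hlen hne he1 he0).add dvd_rfl)
  refine ⟨fun g hg => hcop.dvd_of_dvd_mul_left ?_, hdvd⟩
  have hgenus : ((q : ℤ) ^ 2 - 1) * g = (L.map fun d => (q : ℤ) ^ d - 1).prod
      - ((q : ℤ) * ((q : ℤ) - 1) * 2 ^ (L.length - 1) * e - ((q : ℤ) ^ 2 - 1)) := by
    linear_combination hg
  exact (dvd_mul_right _ _).trans (hgenus ▸ hdvd)

/-- Corollary 4.2: `q` divides the genus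
`g = 1 + (∏_{x∈R}(q^{d_x}-1) - q(q-1)2^{#R-1}·wp(R))/(q^2-1)`; equivalently,
`∏_{x∈R}(q^{d_x}-1) ≡ q(q-1)2^{#R-1}·wp(R) - (q^2-1)  (mod q(q^2-1))`. -/
theorem genus_divisible_by_q
    (q : ℕ) (hq : 2 ≤ q) (L : List ℕ) (hL : ∀ d ∈ L, 1 ≤ d)
    (hlen : Even L.length) (hne : L ≠ [])
    (e : ℤ) (he1 : (∀ d ∈ L, Odd d) → e = 1) (he0 : (¬ ∀ d ∈ L, Odd d) → e = 0) :
    (∀ g : ℤ, ((q : ℤ) ^ 2 - 1) * (g - 1)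
        = (L.map fun d => (q : ℤ) ^ d - 1).prod
            - (q : ℤ) * ((q : ℤ) - 1) * 2 ^ (L.length - 1) * e
      → (q : ℤ) ∣ g) ∧
    ((q : ℤ) * ((q : ℤ) ^ 2 - 1)) ∣
      ((L.map fun d => (q : ℤ) ^ d - 1).prod
        - ((q : ℤ) * ((q : ℤ) - 1) * 2 ^ (L.length - 1) * e - ((q : ℤ) ^ 2 - 1))) :=
  genus_divisible_by_q_general q L hL hlen hne e he1 he0
end
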